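/- A finite group G is strongly flat if and only if m(H) < m(G) for every proper subgroup H < G. -/

import Mathlib

/-- A finite subset of a group is irredundant if no element lies in the
subgroup generated by the remaining elements. -/
def Irredundant {G : Type*} [Group G] (s : Finset G) : Prop :=
  ∀ g ∈ s, g ∉ Subgroup.closure ((s : Set G) \ {g})

/-- `mRank G` : maximal size of an irredundant generating set of `G`. -/
noncomputable def mRank (G : Type*) [Group G] : ℕ :=
  sSup {n | ∃ s : Finset G, Irredundant s ∧ Subgroup.closure (s : Set G) = ⊤ ∧ s.card = n}

/-- `iRank G` : maximal size of an irredundant subset of `G`. -/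
noncomputable def iRank (G : Type*) [Group G] : ℕ :=
  sSup {n | ∃ s : Finset G, Irredundant s ∧ s.card = n}

/-- A family of subgroups is in general position. -/
def GenPos {G : Type*} [Group G] {ι : Type*} (H : ι → Subgroup G) : Prop :=
  ∀ I J : Finset ι, I ⊂ J → (⨅ j ∈ J, H j) < (⨅ i ∈ I, H i)

/-- Maximal size of a family of maximal subgroups in general position. -/
noncomputable def MaxDim (G : Type*) [Group G] : ℕ :=
  sSup {k | ∃ M : Fin k → Subgroup G, (∀ j, IsCoatom (M j)) ∧ GenPos M}

/-!
If every proper subgroup `H` has `m(H) < m(G)`, then an irredundant set `s` that does not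
generate `G` is an irredundant generating set of the proper subgroup `⟨s⟩`, so
`|s| ≤ m(⟨s⟩) < m(G)`; this gives both `i(G) ≤ m(G)` and strong flatness. Conversely, an
irredundant generating set of a proper subgroup `H` with `m(H) ≥ m(G)` is an irredundant subset
of `G` of size at least `m(G) = i(G)`, so strong flatness forces it to generate `G`.
-/

open Subgroup

theorem bddAbove_of_forall_mem_exists_card_eq {α : Type*} [Finite α] {S : Set ℕ}
    (h : ∀ n ∈ S, ∃ s : Finset α, s.card = n) : BddAbove S := by
  have := Fintype.ofFinite α
  refine ⟨Fintype.card α, fun n hn => ?_⟩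
  obtain ⟨s, rfl⟩ := h n hn
  exact s.card_le_univ

section Irredundant

variable {G : Type*} [Group G]

theorem exists_irredundant_subset_closure_eq (s : Finset G) :
    ∃ t ⊆ s, Irredundant t ∧ closure (t : Set G) = closure (s : Set G) := by
  classical
  induction s using Finset.strongInductionOn with
  | _ s ih =>
    by_cases hs : Irredundant s
    · exact ⟨s, subset_rfl, hs, rfl⟩
    obtain ⟨g, hg, hmem⟩ : ∃ g ∈ s, g ∈ closure ((s : Set G) \ {g}) := by
      simpa [Irredundant] using hs
    obtain ⟨t, hts, ht, hclosure⟩ := ih (s.erase g) (Finset.erase_ssubset hg)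
    refine ⟨t, hts.trans (Finset.erase_subset g s), ht, ?_⟩
    rw [hclosure, Finset.coe_erase]
    refine le_antisymm (closure_mono Set.sdiff_subset) ((closure_le _).2 fun x hx => ?_)
    by_cases hxg : x = g
    · exact hxg ▸ hmem
    · exact subset_closure ⟨hx, hxg⟩

theorem Irredundant.map_iff {K : Type*} [Group K] {f : G →* K} (hf : Function.Injective f)
    (s : Finset G) : Irredundant (s.map ⟨f, hf⟩) ↔ Irredundant s := by
  have hdiff (g : G) : ((s.map ⟨f, hf⟩ : Finset K) : Set K) \ {f g} = f '' ((s : Set G) \ {g}) := by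
    rw [Set.image_sdiff hf, Set.image_singleton, Finset.coe_map]
    rfl
  simp only [Irredundant, Finset.forall_mem_map]
  refine forall₂_congr fun g _ => ?_
  rw [Function.Embedding.coeFn_mk, hdiff, ← MonoidHom.map_closure, mem_map_iff_mem hf]

variable [Finite G]

theorem Irredundant.card_le_iRank {s : Finset G} (hs : Irredundant s) : s.card ≤ iRank G := by
  refine le_csSup (bddAbove_of_forall_mem_exists_card_eq (α := G) ?_) ⟨s, hs, rfl⟩
  exact fun n ⟨t, _, ht⟩ => ⟨t, ht⟩

theorem Irredundant.card_le_mRank {s : Finset G} (hs : Irredundant s)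
    (hgen : closure (s : Set G) = ⊤) : s.card ≤ mRank G := by
  refine le_csSup (bddAbove_of_forall_mem_exists_card_eq (α := G) ?_) ⟨s, hs, hgen, rfl⟩
  exact fun n ⟨t, _, _, ht⟩ => ⟨t, ht⟩

theorem exists_irredundant_closure_eq_top_card_eq_mRank :
    ∃ s : Finset G, Irredundant s ∧ closure (s : Set G) = ⊤ ∧ s.card = mRank G := by
  have := Fintype.ofFinite G
  obtain ⟨s, -, hs, hgen⟩ := exists_irredundant_subset_closure_eq (Finset.univ : Finset G)
  rw [Finset.coe_univ, Subgroup.closure_univ] at hgen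
  exact Nat.sSup_mem (s := {n | ∃ s : Finset G, Irredundant s ∧ closure (s : Set G) = ⊤ ∧
    s.card = n}) ⟨s.card, s, hs, hgen, rfl⟩
    (bddAbove_of_forall_mem_exists_card_eq fun n ⟨t, _, _, ht⟩ => ⟨t, ht⟩)

theorem mRank_le_iRank : mRank G ≤ iRank G := by
  obtain ⟨s, hs, -, hcard⟩ := exists_irredundant_closure_eq_top_card_eq_mRank (G := G)
  exact hcard ▸ hs.card_le_iRank

theorem exists_irredundant_closure_eq_card_eq_mRank (H : Subgroup G) :
    ∃ s : Finset G, Irredundant s ∧ closure (s : Set G) = H ∧ s.card = mRank H := by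
  obtain ⟨t, ht, hgen, hcard⟩ := exists_irredundant_closure_eq_top_card_eq_mRank (G := H)
  refine ⟨t.map ⟨H.subtype, H.subtype_injective⟩, (Irredundant.map_iff _ t).2 ht, ?_, ?_⟩
  · rw [Finset.coe_map, Function.Embedding.coeFn_mk, ← MonoidHom.map_closure, hgen,
      ← MonoidHom.range_eq_map, range_subtype]
  · rwa [Finset.card_map]

theorem Irredundant.card_le_mRank_closure {s : Finset G} (hs : Irredundant s) :
    s.card ≤ mRank (closure (s : Set G)) := by
  classical
  set H := closure (s : Set G)
  set t := s.subtype (· ∈ H)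
  have hmap : t.map ⟨H.subtype, H.subtype_injective⟩ = s :=
    (Finset.subtype_map (· ∈ H)).trans
      (Finset.filter_true_of_mem fun x hx => Subgroup.subset_closure hx)
  have hgen : closure (t : Set H) = ⊤ := by
    refine map_injective H.subtype_injective ?_
    have himage : H.subtype '' (t : Set H) = s := by
      rw [← hmap, Finset.coe_map]
      rfl
    rw [MonoidHom.map_closure, ← MonoidHom.range_eq_map, range_subtype, himage]
  rw [← hmap, Finset.card_map]
  exact ((Irredundant.map_iff _ t).1 (hmap ▸ hs)).card_le_mRank hgen

end Irredundant

theorem stmt12 {G : Type*} [Group G] [Finite G] :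
    (mRank G = iRank G ∧ ∀ s : Finset G, Irredundant s → s.card = mRank G →
      Subgroup.closure (s : Set G) = ⊤)
    ↔ ∀ H : Subgroup G, H ≠ ⊤ → mRank H < mRank G := by
  constructor
  · rintro ⟨hflat, hstrong⟩ H hH
    obtain ⟨s, hs, hclosure, hcard⟩ := exists_irredundant_closure_eq_card_eq_mRank H
    by_contra! hle
    have hcard' : s.card = mRank G := le_antisymm (hflat ▸ hs.card_le_iRank) (hcard ▸ hle)
    exact hH (hclosure ▸ hstrong s hs hcard')
  · intro hH
    have hlt (s : Finset G) (hs : Irredundant s) (hne : closure (s : Set G) ≠ ⊤) :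
        s.card < mRank G :=
      hs.card_le_mRank_closure.trans_lt (hH _ hne)
    refine ⟨le_antisymm mRank_le_iRank (csSup_le ⟨0, ∅, by simp [Irredundant]⟩ ?_),
      fun s hs hcard => by_contra fun hne => (hlt s hs hne).ne hcard⟩
    rintro n ⟨s, hs, rfl⟩
    by_cases hgen : closure (s : Set G) = ⊤
    · exact hs.card_le_mRank hgen
    · exact (hlt s hs hgen).le
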